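/- arXiv:1905.03762 — 5 statements merged into one kernel-verified Lean document; each statement's English description precedes it below -/
import Mathlib

section
/- In a partial group L, if u ∈ D(L) and u = u^{-1}, then for every natural number k, u^k ∈ D(L) and Π(u^k) = Π(Π(u)^k), where u^k denotes the concatenation of k copies of u. -/
universe u v

/-- A partial group: a set `L` with a domain `D ⊆ W(L)` of words, a (total extension of the)
partial product `Pi`, and an involutory inversion, satisfying axioms (PG1)-(PG4).
The value of `Pi` outside `D` is irrelevant. -/
structure PartialGroup (L : Type u) : Type u where
  D : Set (List L)
  Pi : List L → L
  inv : L → L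
  inv_inv : ∀ g, inv (inv g) = g
  singleton_mem : ∀ g, [g] ∈ D
  append_left_mem : ∀ {u v : List L}, u ++ v ∈ D → u ∈ D
  append_right_mem : ∀ {u v : List L}, u ++ v ∈ D → v ∈ D
  Pi_singleton : ∀ g, Pi [g] = g
  pg3_mem : ∀ u v w : List L, u ++ v ++ w ∈ D → u ++ [Pi v] ++ w ∈ D
  pg3_eq : ∀ u v w : List L, u ++ v ++ w ∈ D → Pi (u ++ v ++ w) = Pi (u ++ [Pi v] ++ w)
  pg4_mem : ∀ w ∈ D, (List.map inv w).reverse ++ w ∈ D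
  pg4_eq : ∀ w ∈ D, Pi ((List.map inv w).reverse ++ w) = Pi []

namespace PartialGroup

variable {L : Type u} {L' : Type v}

/-- Inversion of a word: `(g_1,...,g_k)⁻¹ = (g_k⁻¹,...,g_1⁻¹)`. -/
def wInv (P : PartialGroup L) (w : List L) : List L := (w.map P.inv).reverse

/-- The identity `1 = Π(∅)`. -/
def one (P : PartialGroup L) : L := P.Pi []

/-- Conjugation `x^g = Π(g⁻¹, x, g)`. -/
def cnj (P : PartialGroup L) (g x : L) : L := P.Pi [P.inv g, x, g]

/-- `x ∈ D(g)`, i.e. `(g⁻¹, x, g) ∈ D(L)`. -/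
def memD (P : PartialGroup L) (g x : L) : Prop := [P.inv g, x, g] ∈ P.D

/-- `H` is a partial subgroup of `L`. -/
def IsPartialSubgroup (P : PartialGroup L) (H : Set L) : Prop :=
  H.Nonempty ∧ (∀ g ∈ H, P.inv g ∈ H) ∧ ∀ w ∈ P.D, (∀ x ∈ w, x ∈ H) → P.Pi w ∈ H

/-- `N` is a partial normal subgroup of `L`. -/
def IsPartialNormal (P : PartialGroup L) (N : Set L) : Prop :=
  P.IsPartialSubgroup N ∧ ∀ g : L, ∀ n ∈ N, P.memD g n → P.cnj g n ∈ N

/-- `H` is a subgroup of `L`: a partial subgroup with `W(H) ⊆ D(L)`. -/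
def IsSubgroup (P : PartialGroup L) (H : Set L) : Prop :=
  P.IsPartialSubgroup H ∧ ∀ w : List L, (∀ x ∈ w, x ∈ H) → w ∈ P.D

/-- Homomorphism of partial groups. -/
def IsHom (P : PartialGroup L) (P' : PartialGroup L') (φ : L → L') : Prop :=
  ∀ w ∈ P.D, w.map φ ∈ P'.D ∧ φ (P.Pi w) = P'.Pi (w.map φ)

/-- Isomorphism of partial groups: a bijective homomorphism with `D(L)^φ = D(L')`. -/
def IsIso (P : PartialGroup L) (P' : PartialGroup L') (φ : L → L') : Prop :=
  Function.Bijective φ ∧ P.IsHom P' φ ∧ List.map φ '' P.D = P'.D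

end PartialGroup

namespace PartialGroup

variable {L : Type u} (P : PartialGroup L)

theorem mem_of_prefix {v w : List L} (hvw : v <+: w) (hw : w ∈ P.D) : v ∈ P.D := by
  obtain ⟨t, rfl⟩ := hvw
  exact P.append_left_mem hw

theorem wInv_append (v w : List L) : P.wInv (v ++ w) = P.wInv w ++ P.wInv v := by
  simp [wInv]

theorem wInv_flatten (ws : List (List L)) :
    P.wInv ws.flatten = (ws.reverse.map P.wInv).flatten := by
  induction ws with
  | nil => rfl
  | cons w ws ih => simp [wInv_append, ih]

theorem wInv_flatten_replicate {u : List L} (hself : P.wInv u = u) (k : ℕ) :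
    P.wInv (List.replicate k u).flatten = (List.replicate k u).flatten := by
  rw [wInv_flatten, List.reverse_replicate, List.map_replicate, hself]

theorem flatten_replicate_prefix (u : List L) {m n : ℕ} (hmn : m ≤ n) :
    (List.replicate m u).flatten <+: (List.replicate n u).flatten := by
  obtain ⟨d, rfl⟩ := Nat.exists_eq_add_of_le hmn
  exact ⟨_, by rw [List.replicate_add, List.flatten_append]⟩

/-- (PG4) applied to the self-inverse word `u^(k+1)` yields `u^(2k+2) ∈ D`, of which `u^(k+2)` is
a prefix. -/
theorem flatten_replicate_mem {u : List L} (hu : u ∈ P.D) (hself : P.wInv u = u) (k : ℕ) :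
    (List.replicate k u).flatten ∈ P.D := by
  suffices h : ∀ n, (List.replicate (n + 1) u).flatten ∈ P.D from
    P.mem_of_prefix (flatten_replicate_prefix u k.le_succ) (h k)
  intro n
  induction n with
  | zero => simpa using hu
  | succ n ih =>
    have hdouble := P.pg4_mem _ ih
    rw [← wInv, wInv_flatten_replicate P hself, ← List.flatten_append,
      ← List.replicate_add] at hdouble
    exact P.mem_of_prefix (flatten_replicate_prefix u (by omega)) hdouble

theorem Pi_append_flatten (p : List L) (ws : List (List L)) (h : p ++ ws.flatten ∈ P.D) :
    p ++ ws.map P.Pi ∈ P.D ∧ P.Pi (p ++ ws.flatten) = P.Pi (p ++ ws.map P.Pi) := by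
  induction ws generalizing p with
  | nil => exact ⟨h, rfl⟩
  | cons w ws ih =>
    rw [List.flatten_cons, ← List.append_assoc] at h
    obtain ⟨hmem, hPi⟩ := ih (p ++ [P.Pi w]) (P.pg3_mem _ _ _ h)
    simp only [List.append_assoc, List.singleton_append] at hmem hPi
    rw [List.flatten_cons, List.map_cons, ← hPi, ← List.append_assoc, P.pg3_eq _ _ _ h,
      List.append_assoc, List.singleton_append]
    exact ⟨hmem, rfl⟩

end PartialGroup

open PartialGroup

theorem stmt2 {L : Type u} (P : PartialGroup L) (u : List L) (hu : u ∈ P.D)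
    (hself : P.wInv u = u) (k : ℕ) :
    (List.replicate k u).flatten ∈ P.D ∧
      P.Pi ((List.replicate k u).flatten) = P.Pi (List.replicate k (P.Pi u)) := by
  have hmem := P.flatten_replicate_mem hu hself k
  refine ⟨hmem, ?_⟩
  simpa only [List.nil_append, List.map_replicate] using (P.Pi_append_flatten [] _ hmem).2
end

section
/- Let X and N be partial groups and let φ: X → Aut(N) be a homomorphism of partial groups (i.e., X acts on N via φ). Then the external semidirect product X ⋉_φ N is a partial group. -/
universe u v

open PartialGroup

/-- A partial group `X` acts on a partial group `N` via `a : X → N → N`: each `a x` is an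
automorphism of `N`, and `x ↦ a x` is a homomorphism of partial groups from `X` to `Aut(N)`
(the latter carrying the full domain; products in `Aut(N)` are composed left-to-right,
matching the exponential notation `n^{c₁c₂} = (n^{c₁})^{c₂}`). -/
def IsAction {X : Type u} {N : Type v} (PX : PartialGroup X) (PN : PartialGroup N)
    (a : X → N → N) : Prop :=
  (∀ x, PN.IsIso PN (a x)) ∧
    ∀ w ∈ PX.D, ∀ n, a (PX.Pi w) n = w.foldl (fun m x => a x m) n

/-- For `w = ((x₁,f₁),...,(xₙ,fₙ))`, the word
`w_N = (f₁^{(x₂⋯xₙ)^φ}, f₂^{(x₃⋯xₙ)^φ}, ..., fₙ)`. -/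
def sdN {X : Type u} {N : Type v} (PX : PartialGroup X) (a : X → N → N) :
    List (X × N) → List N
  | [] => []
  | q :: rest => a (PX.Pi (rest.map Prod.fst)) q.2 :: sdN PX a rest

/-- `PL` is the external semidirect product `X ⋉_a N`: underlying set `X × N`,
domain `{w : w_X ∈ D(X) ∧ w_N ∈ D(N)}`, product `Π(w) = (Π_X(w_X), Π_N(w_N))`,
inversion `(x,f)⁻¹ = (x⁻¹, (f⁻¹)^{(x⁻¹)^φ})`. -/
def IsExtSemidirect {X : Type u} {N : Type v} (PX : PartialGroup X) (PN : PartialGroup N)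
    (a : X → N → N) (PL : PartialGroup (X × N)) : Prop :=
  PL.D = {w | w.map Prod.fst ∈ PX.D ∧ sdN PX a w ∈ PN.D} ∧
  (∀ w ∈ PL.D, PL.Pi w = (PX.Pi (w.map Prod.fst), PN.Pi (sdN PX a w))) ∧
  ∀ p : X × N, PL.inv p = (PX.inv p.1, a (PX.inv p.1) (PN.inv p.2))

section Aux

variable {L : Type u} {L' : Type v}

lemma aux_nil_mem (P : PartialGroup L) : ([] : List L) ∈ P.D :=
  P.append_left_mem (u := []) (v := [P.Pi []]) (P.singleton_mem (P.Pi []))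

lemma aux_inv_pair_mem (P : PartialGroup L) (g : L) : [P.inv g, g] ∈ P.D := by
  simpa using P.pg4_mem [g] (P.singleton_mem g)

lemma aux_inv_pair_eq (P : PartialGroup L) (g : L) : P.Pi [P.inv g, g] = P.Pi [] := by
  simpa using P.pg4_eq [g] (P.singleton_mem g)

lemma aux_inv_uniq (P : PartialGroup L) {g h : L} (hD : [g, h] ∈ P.D)
    (he : P.Pi [g, h] = P.Pi []) : h = P.inv g := by
  have h4 : [P.inv h, P.inv g, g, h] ∈ P.D := by
    simpa using P.pg4_mem [g, h] hD
  have h3 : [P.inv g, g, h] ∈ P.D := P.append_right_mem (u := [P.inv h]) h4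
  have e1 : P.Pi ([P.inv g] ++ [g, h] ++ []) = P.Pi ([P.inv g] ++ [P.Pi [g, h]] ++ []) :=
    P.pg3_eq [P.inv g] [g, h] [] (by simpa using h3)
  have e2 : P.Pi ([P.inv g] ++ [] ++ []) = P.Pi ([P.inv g] ++ [P.Pi []] ++ []) :=
    P.pg3_eq [P.inv g] [] [] (by simpa using P.singleton_mem (P.inv g))
  have e3 : P.Pi ([] ++ [P.inv g, g] ++ [h]) = P.Pi ([] ++ [P.Pi [P.inv g, g]] ++ [h]) :=
    P.pg3_eq [] [P.inv g, g] [h] (by simpa using h3)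
  have e5 : P.Pi ([] ++ [] ++ [h]) = P.Pi ([] ++ [P.Pi []] ++ [h]) :=
    P.pg3_eq [] [] [h] (by simpa using P.singleton_mem h)
  simp only [List.cons_append, List.nil_append, List.append_nil] at e1 e2 e3 e5
  calc h = P.Pi [h] := (P.Pi_singleton h).symm
    _ = P.Pi [P.Pi [], h] := e5
    _ = P.Pi [P.Pi [P.inv g, g], h] := by rw [aux_inv_pair_eq]
    _ = P.Pi [P.inv g, g, h] := e3.symm
    _ = P.Pi [P.inv g, P.Pi [g, h]] := e1
    _ = P.Pi [P.inv g, P.Pi []] := by rw [he]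
    _ = P.Pi [P.inv g] := e2.symm
    _ = P.inv g := P.Pi_singleton _

lemma aux_hom_one {P : PartialGroup L} {P' : PartialGroup L'} {φ : L → L'}
    (h : P.IsHom P' φ) : φ (P.Pi []) = P'.Pi [] := by
  simpa using (h [] (aux_nil_mem P)).2

lemma aux_hom_inv {P : PartialGroup L} {P' : PartialGroup L'} {φ : L → L'}
    (h : P.IsHom P' φ) (g : L) : φ (P.inv g) = P'.inv (φ g) := by
  have h1 := h [P.inv g, g] (aux_inv_pair_mem P g)
  have hd' : [φ (P.inv g), φ g] ∈ P'.D := by simpa using h1.1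
  have he' : P'.Pi [φ (P.inv g), φ g] = P'.Pi [] := by
    have h2 := h1.2
    simp only [List.map_cons, List.map_nil] at h2
    rw [← h2, aux_inv_pair_eq, aux_hom_one h]
  have h3 := aux_inv_uniq P' hd' he'
  rw [h3, P'.inv_inv]

lemma aux_iso_mem_iff {P : PartialGroup L} {P' : PartialGroup L'} {φ : L → L'}
    (h : P.IsIso P' φ) {w : List L} : w.map φ ∈ P'.D ↔ w ∈ P.D := by
  constructor
  · intro hw
    rw [← h.2.2] at hw
    obtain ⟨u, hu, he⟩ := hw
    have : u = w := List.map_injective_iff.2 h.1.injective he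
    rwa [← this]
  · intro hw; exact (h.2.1 w hw).1

end Aux

section SD

variable {X : Type u} {N : Type v} {PX : PartialGroup X} {PN : PartialGroup N}
  {a : X → N → N}

/-- The inversion map of the semidirect product. -/
def sdInv (PX : PartialGroup X) (PN : PartialGroup N) (a : X → N → N) : X × N → X × N :=
  fun p => (PX.inv p.1, a (PX.inv p.1) (PN.inv p.2))

lemma aux_a_pi (ha : IsAction PX PN a) {u : List X} (hu : u ∈ PX.D) (n : N) :
    a (PX.Pi u) n = u.foldl (fun m x => a x m) n := ha.2 u hu n

lemma aux_a_one (ha : IsAction PX PN a) (n : N) : a (PX.Pi []) n = n :=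
  ha.2 [] (aux_nil_mem PX) n

lemma aux_a_comp (ha : IsAction PX PN a) {u v : List X} (hu : u ∈ PX.D) (hv : v ∈ PX.D)
    (huv : u ++ v ∈ PX.D) (m : N) :
    a (PX.Pi (u ++ v)) m = a (PX.Pi v) (a (PX.Pi u) m) := by
  rw [aux_a_pi ha huv, aux_a_pi ha hu, aux_a_pi ha hv, List.foldl_append]

lemma aux_a_inv (ha : IsAction PX PN a) (x : X) (n : N) :
    a x (PN.inv n) = PN.inv (a x n) :=
  aux_hom_inv (ha.1 x).2.1 n

lemma aux_a_mem_iff (ha : IsAction PX PN a) (x : X) {w : List N} :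
    w.map (a x) ∈ PN.D ↔ w ∈ PN.D :=
  aux_iso_mem_iff (ha.1 x)

lemma aux_a_hom (ha : IsAction PX PN a) (x : X) {w : List N} (hw : w ∈ PN.D) :
    a x (PN.Pi w) = PN.Pi (w.map (a x)) := ((ha.1 x).2.1 w hw).2

lemma aux_a_cancel (ha : IsAction PX PN a) (x : X) (f : N) :
    a x (a (PX.inv x) f) = f := by
  have h := aux_a_comp ha (PX.singleton_mem (PX.inv x)) (PX.singleton_mem x)
    (by simpa using aux_inv_pair_mem PX x) f
  simp only [PX.Pi_singleton, List.cons_append, List.nil_append] at h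
  rw [← h, aux_inv_pair_eq, aux_a_one ha]

lemma aux_sdN_cons (q : X × N) (rest : List (X × N)) :
    sdN PX a (q :: rest) = a (PX.Pi (rest.map Prod.fst)) q.2 :: sdN PX a rest := rfl

lemma aux_sdN_single (ha : IsAction PX PN a) (p : X × N) : sdN PX a [p] = [p.2] := by
  rw [show ([p] : List (X × N)) = p :: [] from rfl, aux_sdN_cons]
  simp [sdN, aux_a_one ha]

lemma aux_sdN_append (ha : IsAction PX PN a) :
    ∀ (w v : List (X × N)), (w ++ v).map Prod.fst ∈ PX.D →
    sdN PX a (w ++ v) = (sdN PX a w).map (a (PX.Pi (v.map Prod.fst))) ++ sdN PX a v := by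
  intro w
  induction w with
  | nil => intro v h; simp [sdN]
  | cons q t ih =>
    intro v h
    have ht : (t ++ v).map Prod.fst ∈ PX.D :=
      PX.append_right_mem (u := [q.1]) (by simpa using h)
    have ht' : t.map Prod.fst ++ v.map Prod.fst ∈ PX.D := by simpa using ht
    have htX : t.map Prod.fst ∈ PX.D := PX.append_left_mem ht'
    have hvX : v.map Prod.fst ∈ PX.D := PX.append_right_mem ht'
    have hcomp : a (PX.Pi ((t ++ v).map Prod.fst)) q.2
        = a (PX.Pi (v.map Prod.fst)) (a (PX.Pi (t.map Prod.fst)) q.2) := by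
      rw [List.map_append]
      exact aux_a_comp ha htX hvX ht' q.2
    rw [List.cons_append, aux_sdN_cons, hcomp, ih v ht, aux_sdN_cons]
    simp

lemma aux_sd_wInv (ha : IsAction PX PN a) :
    ∀ w : List (X × N),
      ((w.map (sdInv PX PN a)).reverse ++ w).map Prod.fst ∈ PX.D →
      (sdN PX a ((w.map (sdInv PX PN a)).reverse)).map (a (PX.Pi (w.map Prod.fst)))
        = ((sdN PX a w).map PN.inv).reverse := by
  intro w
  induction w using List.reverseRecOn with
  | nil => intro _; simp [sdN]
  | append_singleton t p ih =>
    intro h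
    set xs := t.map Prod.fst with hxs_def
    set x := p.1 with hx_def
    set iX := (xs.map PX.inv).reverse with hiX_def
    -- the X-part of the hypothesis word in normal form
    have hX : ([PX.inv x] ++ iX) ++ (xs ++ [x]) ∈ PX.D := by
      simpa [sdInv, hxs_def, hiX_def, Function.comp_def] using h
    have hwX : xs ++ [x] ∈ PX.D := PX.append_right_mem hX
    have hxsX : xs ∈ PX.D := PX.append_left_mem hwX
    have hiiX : [PX.inv x] ++ iX ∈ PX.D := PX.append_left_mem hX
    have hiX : iX ∈ PX.D := PX.append_right_mem hiiX
    have hiXxs : iX ++ xs ∈ PX.D := by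
      have h1 : [PX.inv x] ++ ((iX ++ xs) ++ [x]) ∈ PX.D := by
        simpa [List.append_assoc] using hX
      exact PX.append_left_mem (PX.append_right_mem h1)
    have hiXwX : iX ++ (xs ++ [x]) ∈ PX.D := by
      have h1 : [PX.inv x] ++ (iX ++ (xs ++ [x])) ∈ PX.D := by
        simpa [List.append_assoc] using hX
      exact PX.append_right_mem h1
    -- IH hypothesis
    have hIH : ((t.map (sdInv PX PN a)).reverse ++ t).map Prod.fst ∈ PX.D := by
      simpa [sdInv, hxs_def, hiX_def, Function.comp_def] using hiXxs
    have ihe := ih hIH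
    -- rewrite the word to be inverted
    have hrw : ((t ++ [p]).map (sdInv PX PN a)).reverse
        = sdInv PX PN a p :: (t.map (sdInv PX PN a)).reverse := by simp
    have hfst : ((t.map (sdInv PX PN a)).reverse).map Prod.fst = iX := by
      simp [sdInv, hxs_def, hiX_def, Function.comp_def]
    -- compute LHS
    rw [hrw, aux_sdN_cons, hfst, List.map_cons]
    -- head of LHS
    have hhead : a (PX.Pi ((t ++ [p]).map Prod.fst))
        (a (PX.Pi iX) ((sdInv PX PN a p).2)) = PN.inv p.2 := by
      have hsnd : (sdInv PX PN a p).2 = a (PX.Pi [PX.inv x]) (PN.inv p.2) := by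
        simp [sdInv, PX.Pi_singleton, hx_def]
      rw [hsnd, ← aux_a_comp ha (PX.singleton_mem (PX.inv x)) hiX hiiX,
        show (t ++ [p]).map Prod.fst = xs ++ [x] by simp [hxs_def, hx_def],
        ← aux_a_comp ha hiiX hwX (by simpa [List.append_assoc] using hX)]
      have hpi : PX.Pi (([PX.inv x] ++ iX) ++ (xs ++ [x])) = PX.Pi [] := by
        have := PX.pg4_eq (xs ++ [x]) hwX
        simpa [hiX_def, Function.comp_def] using this
      rw [hpi, aux_a_one ha]
    rw [hhead]
    -- tail of LHS
    have htail : (sdN PX a ((t.map (sdInv PX PN a)).reverse)).map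
        (a (PX.Pi ((t ++ [p]).map Prod.fst)))
        = ((sdN PX a t).map PN.inv).reverse.map (a x) := by
      have hpt : ∀ m : N, a (PX.Pi ((t ++ [p]).map Prod.fst)) m
          = a x (a (PX.Pi xs) m) := by
        intro m
        rw [show (t ++ [p]).map Prod.fst = xs ++ [x] by simp [hxs_def, hx_def],
          aux_a_comp ha hxsX (PX.singleton_mem x) hwX, PX.Pi_singleton]
      calc (sdN PX a ((t.map (sdInv PX PN a)).reverse)).map
            (a (PX.Pi ((t ++ [p]).map Prod.fst)))
          = (sdN PX a ((t.map (sdInv PX PN a)).reverse)).map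
            (fun m => a x (a (PX.Pi xs) m)) := List.map_congr_left (fun m _ => hpt m)
        _ = ((sdN PX a ((t.map (sdInv PX PN a)).reverse)).map
            (a (PX.Pi xs))).map (a x) := by rw [List.map_map]; rfl
        _ = ((sdN PX a t).map PN.inv).reverse.map (a x) := by rw [ihe]
    rw [htail]
    -- compute RHS
    rw [aux_sdN_append ha t [p] (by simpa [hxs_def, hx_def] using hwX),
      aux_sdN_single ha]
    have hlast : ((sdN PX a t).map (a (PX.Pi [p.1]))).map PN.inv
        = ((sdN PX a t).map PN.inv).map (a x) := by
      simp only [List.map_map]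
      refine List.map_congr_left (fun m _ => ?_)
      simp only [Function.comp_apply, PX.Pi_singleton]
      rw [← hx_def, aux_a_inv ha]
    simp only [List.map_append, List.reverse_append, List.map_cons, List.map_nil,
      List.reverse_cons, List.reverse_nil, List.nil_append, hlast, List.map_reverse]
    rfl

end SD

theorem stmt7 {X : Type u} {N : Type v} (PX : PartialGroup X) (PN : PartialGroup N)
    (a : X → N → N) (ha : IsAction PX PN a) :
    ∃ PL : PartialGroup (X × N), IsExtSemidirect PX PN a PL := by
  refine ⟨{
    D := {w | w.map Prod.fst ∈ PX.D ∧ sdN PX a w ∈ PN.D}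
    Pi := fun w => (PX.Pi (w.map Prod.fst), PN.Pi (sdN PX a w))
    inv := sdInv PX PN a
    inv_inv := ?_
    singleton_mem := ?_
    append_left_mem := ?_
    append_right_mem := ?_
    Pi_singleton := ?_
    pg3_mem := ?_
    pg3_eq := ?_
    pg4_mem := ?_
    pg4_eq := ?_ }, rfl, fun w _ => rfl, fun p => rfl⟩
  · -- inv_inv
    rintro ⟨x, f⟩
    simp only [sdInv, PX.inv_inv]
    rw [← aux_a_inv ha, PN.inv_inv, aux_a_cancel ha]
  · -- singleton_mem
    intro g
    exact ⟨by simpa using PX.singleton_mem g.1,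
      by rw [aux_sdN_single ha]; exact PN.singleton_mem g.2⟩
  · -- append_left_mem
    rintro u v ⟨hX, hN⟩
    have huvX : u.map Prod.fst ++ v.map Prod.fst ∈ PX.D := by simpa using hX
    refine ⟨PX.append_left_mem huvX, ?_⟩
    rw [aux_sdN_append ha u v hX] at hN
    exact (aux_a_mem_iff ha _).1 (PN.append_left_mem hN)
  · -- append_right_mem
    rintro u v ⟨hX, hN⟩
    have huvX : u.map Prod.fst ++ v.map Prod.fst ∈ PX.D := by simpa using hX
    refine ⟨PX.append_right_mem huvX, ?_⟩
    rw [aux_sdN_append ha u v hX] at hN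
    exact PN.append_right_mem hN
  · -- Pi_singleton
    intro g
    simp [aux_sdN_single ha, PX.Pi_singleton, PN.Pi_singleton]
  · -- pg3_mem
    rintro u v w ⟨hX, hN⟩
    have hX' : (u.map Prod.fst ++ v.map Prod.fst) ++ w.map Prod.fst ∈ PX.D := by
      simpa using hX
    have hvwX : v.map Prod.fst ++ w.map Prod.fst ∈ PX.D := by
      have : u.map Prod.fst ++ (v.map Prod.fst ++ w.map Prod.fst) ∈ PX.D := by
        simpa [List.append_assoc] using hX'
      exact PX.append_right_mem this
    have hvX : v.map Prod.fst ∈ PX.D := PX.append_left_mem hvwX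
    have hwX : w.map Prod.fst ∈ PX.D := PX.append_right_mem hvwX
    -- X part of the target
    have htX : (u.map Prod.fst ++ [PX.Pi (v.map Prod.fst)]) ++ w.map Prod.fst ∈ PX.D :=
      PX.pg3_mem _ _ _ hX'
    have htX' : ((u ++ [(PX.Pi (v.map Prod.fst), PN.Pi (sdN PX a v))] ++ w)).map Prod.fst
        ∈ PX.D := by simpa using htX
    refine ⟨htX', ?_⟩
    -- decompose sdN of the original word
    have hdec : sdN PX a (u ++ v ++ w)
        = (sdN PX a u).map (a (PX.Pi (v.map Prod.fst ++ w.map Prod.fst)))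
          ++ ((sdN PX a v).map (a (PX.Pi (w.map Prod.fst))) ++ sdN PX a w) := by
      rw [List.append_assoc, aux_sdN_append ha u (v ++ w)
        (by simpa [List.append_assoc] using hX),
        aux_sdN_append ha v w (by simpa using hvwX)]
      simp
    rw [hdec] at hN
    have hB : (sdN PX a v).map (a (PX.Pi (w.map Prod.fst))) ∈ PN.D :=
      PN.append_left_mem (PN.append_right_mem hN)
    have hsdv : sdN PX a v ∈ PN.D := (aux_a_mem_iff ha _).1 hB
    -- decompose sdN of the target word
    set q : X × N := (PX.Pi (v.map Prod.fst), PN.Pi (sdN PX a v)) with hq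
    have hdec2 : sdN PX a (u ++ [q] ++ w)
        = (sdN PX a u).map (a (PX.Pi ([q.1] ++ w.map Prod.fst)))
          ++ ([a (PX.Pi (w.map Prod.fst)) q.2] ++ sdN PX a w) := by
      rw [List.append_assoc, aux_sdN_append ha u ([q] ++ w)
        (by simpa [List.append_assoc] using htX'),
        aux_sdN_append ha [q] w (by
          have := PX.append_right_mem (u := u.map Prod.fst)
            (by simpa [List.append_assoc] using htX)
          simpa using this),
        aux_sdN_single ha]
      simp
    rw [hdec2]
    have hq1 : PX.Pi ([q.1] ++ w.map Prod.fst)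
        = PX.Pi (v.map Prod.fst ++ w.map Prod.fst) := by
      have := PX.pg3_eq [] (v.map Prod.fst) (w.map Prod.fst) (by simpa using hvwX)
      simpa [hq] using this.symm
    have hq2 : a (PX.Pi (w.map Prod.fst)) q.2
        = PN.Pi ((sdN PX a v).map (a (PX.Pi (w.map Prod.fst)))) := by
      rw [hq]
      exact aux_a_hom ha _ hsdv
    rw [hq1, hq2]
    have := PN.pg3_mem ((sdN PX a u).map (a (PX.Pi (v.map Prod.fst ++ w.map Prod.fst))))
      ((sdN PX a v).map (a (PX.Pi (w.map Prod.fst)))) (sdN PX a w)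
      (by simpa [List.append_assoc] using hN)
    simpa [List.append_assoc] using this
  · -- pg3_eq
    rintro u v w ⟨hX, hN⟩
    have hX' : (u.map Prod.fst ++ v.map Prod.fst) ++ w.map Prod.fst ∈ PX.D := by
      simpa using hX
    have hvwX : v.map Prod.fst ++ w.map Prod.fst ∈ PX.D := by
      have : u.map Prod.fst ++ (v.map Prod.fst ++ w.map Prod.fst) ∈ PX.D := by
        simpa [List.append_assoc] using hX'
      exact PX.append_right_mem this
    have hvX : v.map Prod.fst ∈ PX.D := PX.append_left_mem hvwX
    have hwX : w.map Prod.fst ∈ PX.D := PX.append_right_mem hvwX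
    have htX : (u.map Prod.fst ++ [PX.Pi (v.map Prod.fst)]) ++ w.map Prod.fst ∈ PX.D :=
      PX.pg3_mem _ _ _ hX'
    have htX' : ((u ++ [(PX.Pi (v.map Prod.fst), PN.Pi (sdN PX a v))] ++ w)).map Prod.fst
        ∈ PX.D := by simpa using htX
    have hdec : sdN PX a (u ++ v ++ w)
        = (sdN PX a u).map (a (PX.Pi (v.map Prod.fst ++ w.map Prod.fst)))
          ++ ((sdN PX a v).map (a (PX.Pi (w.map Prod.fst))) ++ sdN PX a w) := by
      rw [List.append_assoc, aux_sdN_append ha u (v ++ w)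
        (by simpa [List.append_assoc] using hX),
        aux_sdN_append ha v w (by simpa using hvwX)]
      simp
    have hN' := hN
    rw [hdec] at hN'
    have hB : (sdN PX a v).map (a (PX.Pi (w.map Prod.fst))) ∈ PN.D :=
      PN.append_left_mem (PN.append_right_mem hN')
    have hsdv : sdN PX a v ∈ PN.D := (aux_a_mem_iff ha _).1 hB
    set q : X × N := (PX.Pi (v.map Prod.fst), PN.Pi (sdN PX a v)) with hq
    have hdec2 : sdN PX a (u ++ [q] ++ w)
        = (sdN PX a u).map (a (PX.Pi ([q.1] ++ w.map Prod.fst)))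
          ++ ([a (PX.Pi (w.map Prod.fst)) q.2] ++ sdN PX a w) := by
      rw [List.append_assoc, aux_sdN_append ha u ([q] ++ w)
        (by simpa [List.append_assoc] using htX'),
        aux_sdN_append ha [q] w (by
          have := PX.append_right_mem (u := u.map Prod.fst)
            (by simpa [List.append_assoc] using htX)
          simpa using this),
        aux_sdN_single ha]
      simp
    have hq1 : PX.Pi ([q.1] ++ w.map Prod.fst)
        = PX.Pi (v.map Prod.fst ++ w.map Prod.fst) := by
      have := PX.pg3_eq [] (v.map Prod.fst) (w.map Prod.fst) (by simpa using hvwX)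
      simpa [hq] using this.symm
    have hq2 : a (PX.Pi (w.map Prod.fst)) q.2
        = PN.Pi ((sdN PX a v).map (a (PX.Pi (w.map Prod.fst)))) := by
      rw [hq]
      exact aux_a_hom ha _ hsdv
    refine Prod.ext ?_ ?_
    · -- X component
      have := PX.pg3_eq (u.map Prod.fst) (v.map Prod.fst) (w.map Prod.fst) hX'
      simpa using this
    · -- N component
      show PN.Pi (sdN PX a (u ++ v ++ w)) = PN.Pi (sdN PX a (u ++ [q] ++ w))
      rw [hdec, hdec2, hq1, hq2]
      have := PN.pg3_eq
        ((sdN PX a u).map (a (PX.Pi (v.map Prod.fst ++ w.map Prod.fst))))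
        ((sdN PX a v).map (a (PX.Pi (w.map Prod.fst)))) (sdN PX a w)
        (by simpa [List.append_assoc] using hN')
      simpa [List.append_assoc] using this
  · -- pg4_mem
    rintro w ⟨hX, hN⟩
    have hXfull : (((w.map (sdInv PX PN a)).reverse ++ w)).map Prod.fst ∈ PX.D := by
      have := PX.pg4_mem (w.map Prod.fst) hX
      simpa [sdInv, Function.comp_def] using this
    refine ⟨hXfull, ?_⟩
    rw [aux_sdN_append ha _ w (by simpa using hXfull), aux_sd_wInv ha w hXfull]
    exact PN.pg4_mem (sdN PX a w) hN
  · -- pg4_eq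
    rintro w ⟨hX, hN⟩
    have hXfull : (((w.map (sdInv PX PN a)).reverse ++ w)).map Prod.fst ∈ PX.D := by
      have := PX.pg4_mem (w.map Prod.fst) hX
      simpa [sdInv, Function.comp_def] using this
    refine Prod.ext ?_ ?_
    · have := PX.pg4_eq (w.map Prod.fst) hX
      simpa [sdInv, Function.comp_def] using this
    · show PN.Pi (sdN PX a ((w.map (sdInv PX PN a)).reverse ++ w)) = PN.Pi (sdN PX a [])
      rw [aux_sdN_append ha _ w (by simpa using hXfull), aux_sd_wInv ha w hXfull]
      exact PN.pg4_eq (sdN PX a w) hN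
end

section
/- Let L = X ⋉_φ N be the external semidirect product of partial groups X and N via a homomorphism φ: X → Aut(N). If Y is a partial subgroup of X and M is a partial subgroup of N with Y ⊆ N_X(M) (every element of Y normalizes M under the action φ), then (Y, M) = {(y,m) : y ∈ Y, m ∈ M} is a partial subgroup of L. -/
universe u v

open PartialGroup

/- The letters of `w_N` are the `fᵢ ∈ M` twisted by `Π(xᵢ₊₁, …, xₙ)`; that word is a suffix of
`w_X ∈ D(X)`, hence in `D(X)`, so its product lies in `Y` and the twist preserves `M`. -/
theorem mem_of_mem_sdN {X : Type u} {N : Type v} {PX : PartialGroup X} {a : X → N → N}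
    {Y : Set X} {M : Set N} (hY : PX.IsPartialSubgroup Y)
    (hYM : ∀ y ∈ Y, Set.MapsTo (a y) M M) :
    ∀ {w : List (X × N)}, w.map Prod.fst ∈ PX.D → (∀ p ∈ w, p ∈ Y ×ˢ M) →
      ∀ n ∈ sdN PX a w, n ∈ M
  | [], _, _, n, hn => by simp [sdN] at hn
  | q :: rest, hw, hwYM, n, hn => by
    have hrest : rest.map Prod.fst ∈ PX.D := PX.append_right_mem (u := [q.1]) hw
    have hrestYM : ∀ p ∈ rest, p ∈ Y ×ˢ M := fun p hp => hwYM p (List.mem_cons_of_mem _ hp)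
    rcases List.mem_cons.1 hn with rfl | hn
    · have hPi : PX.Pi (rest.map Prod.fst) ∈ Y :=
        hY.2.2 _ hrest (List.forall_mem_map.2 fun p hp => (hrestYM p hp).1)
      exact hYM _ hPi (hwYM q List.mem_cons_self).2
    · exact mem_of_mem_sdN hY hYM hrest hrestYM n hn

theorem stmt8_general {X : Type u} {N : Type v} (PX : PartialGroup X) (PN : PartialGroup N)
    (a : X → N → N)
    (PL : PartialGroup (X × N)) (hL : IsExtSemidirect PX PN a PL)
    (Y : Set X) (M : Set N) (hY : PX.IsPartialSubgroup Y) (hM : PN.IsPartialSubgroup M)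
    (hnorm : ∀ y ∈ Y, a y '' M = M) :
    PL.IsPartialSubgroup (Y ×ˢ M) := by
  obtain ⟨hD, hPi, hinv⟩ := hL
  have hYM : ∀ y ∈ Y, Set.MapsTo (a y) M M :=
    fun y hy => Set.mapsTo_iff_image_subset.2 (hnorm y hy).subset
  refine ⟨hY.1.prod hM.1, ?_, ?_⟩
  · rintro ⟨x, f⟩ ⟨hx, hf⟩
    rw [hinv]
    exact ⟨hY.2.1 x hx, hYM _ (hY.2.1 x hx) (hM.2.1 f hf)⟩
  · intro w hw hwYM
    rw [hPi w hw]
    rw [hD] at hw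
    exact ⟨hY.2.2 _ hw.1 (List.forall_mem_map.2 fun p hp => (hwYM p hp).1),
      hM.2.2 _ hw.2 (mem_of_mem_sdN hY hYM hw.1 hwYM)⟩

theorem stmt8 {X : Type u} {N : Type v} (PX : PartialGroup X) (PN : PartialGroup N)
    (a : X → N → N) (ha : IsAction PX PN a)
    (PL : PartialGroup (X × N)) (hL : IsExtSemidirect PX PN a PL)
    (Y : Set X) (M : Set N) (hY : PX.IsPartialSubgroup Y) (hM : PN.IsPartialSubgroup M)
    (hnorm : ∀ y ∈ Y, a y '' M = M) :
    PL.IsPartialSubgroup (Y ×ˢ M) :=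
  stmt8_general PX PN a PL hL Y M hY hM hnorm
end

section
/- Let L = X ⋉_φ N be the external semidirect product of partial groups. Then the maps α: X → (X,1), y ↦ (y,1) and β: N → (1,N), m ↦ (1,m) are isomorphisms of partial groups, where (X,1) = {(y,1) : y ∈ X} and (1,N) = {(1,m) : m ∈ N} carry the partial group structure restricted from L. -/
universe u v

open PartialGroup

/-
Both coordinates of a word of `(X,1)` or `(1,N)` are computed explicitly: for `w = ((xᵢ,1))`
one has `w_X = (xᵢ)` and `w_N = (1,…,1)`, because automorphisms fix `1`; for `w = ((1,mᵢ))`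
one has `w_X = (1,…,1)` and `w_N = (mᵢ)`, because `Π(1,…,1) = 1` acts trivially.
Since words of ones lie in the domain and multiply to `1`, membership in `D(L)` and the product
in `L` reduce to those of `X`, respectively `N`.
-/

namespace PartialGroup

variable {L : Type u} {L' : Type v}

theorem nil_mem_D (P : PartialGroup L) : ([] : List L) ∈ P.D :=
  P.append_left_mem (v := [P.one]) (P.singleton_mem P.one)

theorem replicate_one_mem_D (P : PartialGroup L) (n : ℕ) :
    List.replicate n P.one ∈ P.D := by
  induction n with
  | zero => exact P.nil_mem_D
  | succ k ih =>
    -- (PG3) applied to an empty middle word appends `Π(∅) = 1`.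
    have h := P.pg3_mem (List.replicate k P.one) [] [] (by simpa using ih)
    simp only [List.append_nil] at h
    rw [List.replicate_succ']
    exact h

theorem Pi_replicate_one (P : PartialGroup L) (n : ℕ) :
    P.Pi (List.replicate n P.one) = P.one := by
  induction n with
  | zero => rfl
  | succ k ih =>
    have h := P.pg3_eq (List.replicate k P.one) [] [] (by simpa using P.replicate_one_mem_D k)
    simp only [List.append_nil] at h
    rw [List.replicate_succ']
    exact h.symm.trans ih

theorem IsHom.map_one {P : PartialGroup L} {P' : PartialGroup L'} {φ : L → L'}
    (hφ : P.IsHom P' φ) : φ P.one = P'.one :=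
  (hφ [] P.nil_mem_D).2

end PartialGroup

namespace IsAction

variable {X : Type u} {N : Type v} {PX : PartialGroup X} {PN : PartialGroup N} {a : X → N → N}

theorem apply_one (ha : IsAction PX PN a) (x : X) : a x PN.one = PN.one :=
  (ha.1 x).2.1.map_one

theorem one_apply (ha : IsAction PX PN a) (n : N) : a PX.one n = n :=
  ha.2 [] PX.nil_mem_D n

theorem sdN_map_inl (ha : IsAction PX PN a) (w : List X) :
    sdN PX a (w.map fun x => ((x, PN.one) : X × N)) = List.replicate w.length PN.one := by
  induction w with
  | nil => rfl
  | cons x t ih => simp only [List.map_cons, sdN, ih, ha.apply_one, List.length_cons,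
      List.replicate_succ]

theorem sdN_map_inr (ha : IsAction PX PN a) (w : List N) :
    sdN PX a (w.map fun m => ((PX.one, m) : X × N)) = w := by
  induction w with
  | nil => rfl
  | cons m t ih =>
    simp only [List.map_cons, sdN, ih, List.map_map, Function.comp_def, List.map_const',
      PX.Pi_replicate_one, ha.one_apply]

end IsAction

namespace IsExtSemidirect

variable {X : Type u} {N : Type v} {PX : PartialGroup X} {PN : PartialGroup N} {a : X → N → N}
  {PL : PartialGroup (X × N)}

theorem mem_D_map_inl_iff (ha : IsAction PX PN a) (hL : IsExtSemidirect PX PN a PL)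
    (w : List X) : w.map (fun x => ((x, PN.one) : X × N)) ∈ PL.D ↔ w ∈ PX.D := by
  simp [hL.1, ha.sdN_map_inl, Function.comp_def, PN.replicate_one_mem_D]

theorem Pi_map_inl (ha : IsAction PX PN a) (hL : IsExtSemidirect PX PN a PL)
    {w : List X} (hw : w ∈ PX.D) :
    PL.Pi (w.map fun x => ((x, PN.one) : X × N)) = (PX.Pi w, PN.one) := by
  rw [hL.2.1 _ ((mem_D_map_inl_iff ha hL w).2 hw), ha.sdN_map_inl, PN.Pi_replicate_one]
  simp [Function.comp_def]

theorem mem_D_map_inr_iff (ha : IsAction PX PN a) (hL : IsExtSemidirect PX PN a PL)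
    (w : List N) : w.map (fun m => ((PX.one, m) : X × N)) ∈ PL.D ↔ w ∈ PN.D := by
  simp [hL.1, ha.sdN_map_inr, Function.comp_def, PX.replicate_one_mem_D]

theorem Pi_map_inr (ha : IsAction PX PN a) (hL : IsExtSemidirect PX PN a PL)
    {w : List N} (hw : w ∈ PN.D) :
    PL.Pi (w.map fun m => ((PX.one, m) : X × N)) = (PX.one, PN.Pi w) := by
  rw [hL.2.1 _ ((mem_D_map_inr_iff ha hL w).2 hw), ha.sdN_map_inr]
  simp [Function.comp_def, PX.Pi_replicate_one]

end IsExtSemidirect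

theorem stmt9 {X : Type u} {N : Type v} (PX : PartialGroup X) (PN : PartialGroup N)
    (a : X → N → N) (ha : IsAction PX PN a)
    (PL : PartialGroup (X × N)) (hL : IsExtSemidirect PX PN a PL) :
    (Function.Injective (fun x : X => ((x, PN.one) : X × N)) ∧
      (∀ w : List X, w ∈ PX.D ↔ w.map (fun x => ((x, PN.one) : X × N)) ∈ PL.D) ∧
      (∀ w ∈ PX.D,
        PL.Pi (w.map (fun x => ((x, PN.one) : X × N))) = (PX.Pi w, PN.one))) ∧
    (Function.Injective (fun m : N => ((PX.one, m) : X × N)) ∧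
      (∀ w : List N, w ∈ PN.D ↔ w.map (fun m => ((PX.one, m) : X × N)) ∈ PL.D) ∧
      (∀ w ∈ PN.D,
        PL.Pi (w.map (fun m => ((PX.one, m) : X × N))) = (PX.one, PN.Pi w))) :=
  ⟨⟨fun _ _ h => congrArg Prod.fst h, fun w => (hL.mem_D_map_inl_iff ha w).symm,
      fun _ hw => hL.Pi_map_inl ha hw⟩,
    ⟨fun _ _ h => congrArg Prod.snd h, fun w => (hL.mem_D_map_inr_iff ha w).symm,
      fun _ hw => hL.Pi_map_inr ha hw⟩⟩
end

section
/- Let L be a partial group which is the internal semidirect product of partial subgroups X and N. Then: (a) (x,n) and (n,x) belong to D(L) for all x ∈ X, n ∈ N; (b) L = XN and X ∩ N = {1}; (c) Π(x,n)^{-1} = Π(x^{-1}, (n^{-1})^{x^{-1}}) and Π(n,x) = Π(x, n^x) for all x ∈ X, n ∈ N; (d) N is a partial normal subgroup of L. -/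
universe u v

open PartialGroup

/-- For a list of pairs `((x₁,n₁),...,(xₖ,nₖ))` (with `xᵢ ∈ X`, `nᵢ ∈ N`), the word
`w_N = (n₁^{Π(x₂,...,xₖ)}, n₂^{Π(x₃,...,xₖ)}, ..., nₖ)`. -/
def sdn {L : Type u} (P : PartialGroup L) : List (L × L) → List L
  | [] => []
  | q :: rest => P.cnj (P.Pi (rest.map Prod.fst)) q.2 :: sdn P rest

/-- `L` is the internal semidirect product of the partial subgroup `X` with the partial
subgroup `N`: axioms (SD1), (SD2), (SD3). -/
structure IsIntSemidirect {L : Type u} (P : PartialGroup L) (X N : Set L) : Prop where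
  subX : P.IsPartialSubgroup X
  subN : P.IsPartialSubgroup N
  sd1 : ∀ x ∈ X, (∀ n ∈ N, P.memD x n) ∧ P.cnj x '' N = N
  sd2 : ∀ g : L, ∃! q : L × L, q.1 ∈ X ∧ q.2 ∈ N ∧ [q.1, q.2] ∈ P.D ∧ g = P.Pi [q.1, q.2]
  sd3 : ∀ q : List (L × L), (∀ r ∈ q, r.1 ∈ X ∧ r.2 ∈ N) →
      ((q.map fun r => P.Pi [r.1, r.2]) ∈ P.D ↔
        q.map Prod.fst ∈ P.D ∧ sdn P q ∈ P.D) ∧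
      ((q.map fun r => P.Pi [r.1, r.2]) ∈ P.D →
        P.Pi (q.map fun r => P.Pi [r.1, r.2]) =
          P.Pi [P.Pi (q.map Prod.fst), P.Pi (sdn P q)])

/-!
Everything comes from (SD3) applied to short words of products `Π(x, n)`, padded with
`1 = Π(1, 1)`. The word `(Π(1, n), Π(x, 1)) = (n, x)` has `X`-part `(1, x)` and `N`-part
`(n^x, 1)`, which gives `(n, x) ∈ D` and `Π(n, x) = Π(x, n^x)`; the inversion formula is this
identity applied to `Π(x, n)⁻¹ = Π(n⁻¹, x⁻¹)`. For normality write `g = Π(x, m)`, so that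
`(g⁻¹, n, g) = (Π(x⁻¹, m'), Π(1, n), Π(x, m))`: its `X`-part `(x⁻¹, 1, x)` has product `1`,
hence `n^g` is the product of the `N`-part, a word in `N`.
-/

namespace PartialGroup

variable {L : Type u} (P : PartialGroup L)

lemma nil_mem (g : L) : ([] : List L) ∈ P.D :=
  P.append_left_mem (v := [g]) (P.singleton_mem g)

lemma Pi_nil : P.Pi [] = P.one := rfl

lemma insert_one_mem {u w : List L} (hd : u ++ w ∈ P.D) : u ++ [P.one] ++ w ∈ P.D :=
  P.pg3_mem u [] w (by simpa using hd)

lemma Pi_insert_one {u w : List L} (hd : u ++ w ∈ P.D) :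
    P.Pi (u ++ [P.one] ++ w) = P.Pi (u ++ w) := by
  simpa [one] using (P.pg3_eq u [] w (by simpa using hd)).symm

lemma pair_one_mem (a : L) : [a, P.one] ∈ P.D := by
  simpa using P.insert_one_mem (u := [a]) (w := []) (by simpa using P.singleton_mem a)

lemma Pi_pair_one (a : L) : P.Pi [a, P.one] = a := by
  simpa [P.Pi_singleton] using
    P.Pi_insert_one (u := [a]) (w := []) (by simpa using P.singleton_mem a)

lemma one_pair_mem (a : L) : [P.one, a] ∈ P.D := by
  simpa using P.insert_one_mem (u := []) (w := [a]) (by simpa using P.singleton_mem a)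

lemma Pi_one_pair (a : L) : P.Pi [P.one, a] = a := by
  simpa [P.Pi_singleton] using
    P.Pi_insert_one (u := []) (w := [a]) (by simpa using P.singleton_mem a)

lemma inv_pair_mem (g : L) : [P.inv g, g] ∈ P.D := by
  simpa using P.pg4_mem [g] (P.singleton_mem g)

lemma Pi_inv_pair (g : L) : P.Pi [P.inv g, g] = P.one := by
  simpa [one] using P.pg4_eq [g] (P.singleton_mem g)

lemma inv_one : P.inv P.one = P.one := by
  simpa [P.Pi_pair_one] using P.Pi_inv_pair P.one

lemma cnj_one (m : L) : P.cnj P.one m = m := by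
  have := P.Pi_insert_one (u := [P.one, m]) (w := []) (by simpa using P.one_pair_mem m)
  simp only [List.cons_append, List.nil_append, List.append_nil] at this
  rw [cnj, P.inv_one, this, P.Pi_one_pair]

lemma Pi_pair_Pi_Pi {u v : List L} (hd : u ++ v ∈ P.D) :
    [P.Pi u, P.Pi v] ∈ P.D ∧ P.Pi [P.Pi u, P.Pi v] = P.Pi (u ++ v) := by
  have hu : [P.Pi u] ++ v ∈ P.D := by simpa using P.pg3_mem [] u v (by simpa using hd)
  have eu : P.Pi (u ++ v) = P.Pi ([P.Pi u] ++ v) := by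
    simpa using P.pg3_eq [] u v (by simpa using hd)
  have huv := P.pg3_mem [P.Pi u] v [] (by simpa using hu)
  have euv := P.pg3_eq [P.Pi u] v [] (by simpa using hu)
  simp only [List.append_nil, List.cons_append, List.nil_append] at huv euv
  exact ⟨huv, by rw [eu, List.cons_append, List.nil_append, euv]⟩

lemma eq_inv_of_Pi_eq_one {a b : L} (hd : [a, b] ∈ P.D) (h1 : P.Pi [a, b] = P.one) :
    b = P.inv a := by
  have hd' : [P.inv a, a, b] ∈ P.D :=
    P.append_right_mem (u := [P.inv b]) (by simpa using P.pg4_mem [a, b] hd)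
  have e1 := (P.Pi_pair_Pi_Pi (u := [P.inv a]) (v := [a, b]) hd').2
  have e2 := (P.Pi_pair_Pi_Pi (u := [P.inv a, a]) (v := [b]) hd').2
  simp only [P.Pi_singleton, h1, P.Pi_pair_one, P.Pi_inv_pair, P.Pi_one_pair,
    List.cons_append, List.nil_append] at e1 e2
  exact e2.trans e1.symm

lemma Pi_wInv {w : List L} (hd : w ∈ P.D) : P.Pi (P.wInv w) = P.inv (P.Pi w) := by
  obtain ⟨hmem, hPi⟩ := P.Pi_pair_Pi_Pi (u := P.wInv w) (P.pg4_mem w hd)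
  rw [P.eq_inv_of_Pi_eq_one hmem (hPi.trans (P.pg4_eq w hd)), P.inv_inv]

lemma sdn_pair (x₁ n₁ x₂ n₂ : L) : sdn P [(x₁, n₁), (x₂, n₂)] = [P.cnj x₂ n₁, n₂] := by
  simp [sdn, P.Pi_singleton, P.Pi_nil, P.cnj_one]

lemma sdn_triple (x₁ n₁ x₂ n₂ x₃ n₃ : L) :
    sdn P [(x₁, n₁), (x₂, n₂), (x₃, n₃)] = [P.cnj (P.Pi [x₂, x₃]) n₁, P.cnj x₃ n₂, n₃] := by
  simp [sdn, P.Pi_singleton, P.Pi_nil, P.cnj_one]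

end PartialGroup

namespace IsIntSemidirect

variable {L : Type u} {P : PartialGroup L} {X N : Set L} {x n x₁ n₁ x₂ n₂ x₃ n₃ : L}

lemma one_mem_left (h : IsIntSemidirect P X N) : P.one ∈ X := by
  obtain ⟨x, -⟩ := h.subX.1
  exact h.subX.2.2 [] (P.nil_mem x) (by simp)

lemma one_mem_right (h : IsIntSemidirect P X N) : P.one ∈ N := by
  obtain ⟨n, -⟩ := h.subN.1
  exact h.subN.2.2 [] (P.nil_mem n) (by simp)

lemma cnj_mem (h : IsIntSemidirect P X N) (hx : x ∈ X) (hn : n ∈ N) :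
    P.cnj x n ∈ N :=
  (h.sd1 x hx).2 ▸ Set.mem_image_of_mem _ hn

lemma mem_D_pair_iff (h : IsIntSemidirect P X N)
    (hx₁ : x₁ ∈ X) (hn₁ : n₁ ∈ N) (hx₂ : x₂ ∈ X) (hn₂ : n₂ ∈ N) :
    [P.Pi [x₁, n₁], P.Pi [x₂, n₂]] ∈ P.D ↔ [x₁, x₂] ∈ P.D ∧ [P.cnj x₂ n₁, n₂] ∈ P.D := by
  simpa [P.sdn_pair] using (h.sd3 [(x₁, n₁), (x₂, n₂)] (by simp [*])).1

lemma Pi_pair_pair (h : IsIntSemidirect P X N)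
    (hx₁ : x₁ ∈ X) (hn₁ : n₁ ∈ N) (hx₂ : x₂ ∈ X) (hn₂ : n₂ ∈ N)
    (hd : [P.Pi [x₁, n₁], P.Pi [x₂, n₂]] ∈ P.D) :
    P.Pi [P.Pi [x₁, n₁], P.Pi [x₂, n₂]] = P.Pi [P.Pi [x₁, x₂], P.Pi [P.cnj x₂ n₁, n₂]] := by
  simpa [P.sdn_pair] using (h.sd3 [(x₁, n₁), (x₂, n₂)] (by simp [*])).2 (by simpa using hd)

lemma mem_D_triple_iff (h : IsIntSemidirect P X N)
    (hx₁ : x₁ ∈ X) (hn₁ : n₁ ∈ N) (hx₂ : x₂ ∈ X) (hn₂ : n₂ ∈ N)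
    (hx₃ : x₃ ∈ X) (hn₃ : n₃ ∈ N) :
    [P.Pi [x₁, n₁], P.Pi [x₂, n₂], P.Pi [x₃, n₃]] ∈ P.D ↔
      [x₁, x₂, x₃] ∈ P.D ∧ [P.cnj (P.Pi [x₂, x₃]) n₁, P.cnj x₃ n₂, n₃] ∈ P.D := by
  simpa [P.sdn_triple] using (h.sd3 [(x₁, n₁), (x₂, n₂), (x₃, n₃)] (by simp [*])).1

lemma Pi_triple (h : IsIntSemidirect P X N)
    (hx₁ : x₁ ∈ X) (hn₁ : n₁ ∈ N) (hx₂ : x₂ ∈ X) (hn₂ : n₂ ∈ N)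
    (hx₃ : x₃ ∈ X) (hn₃ : n₃ ∈ N)
    (hd : [P.Pi [x₁, n₁], P.Pi [x₂, n₂], P.Pi [x₃, n₃]] ∈ P.D) :
    P.Pi [P.Pi [x₁, n₁], P.Pi [x₂, n₂], P.Pi [x₃, n₃]] =
      P.Pi [P.Pi [x₁, x₂, x₃], P.Pi [P.cnj (P.Pi [x₂, x₃]) n₁, P.cnj x₃ n₂, n₃]] := by
  simpa [P.sdn_triple] using
    (h.sd3 [(x₁, n₁), (x₂, n₂), (x₃, n₃)] (by simp [*])).2 (by simpa using hd)

lemma pair_mem_D (h : IsIntSemidirect P X N) (hx : x ∈ X) (hn : n ∈ N) : [x, n] ∈ P.D := by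
  have := (h.mem_D_pair_iff hx h.one_mem_right h.one_mem_left hn).2
    ⟨P.pair_one_mem x, by simpa [P.cnj_one] using P.one_pair_mem n⟩
  rwa [P.Pi_pair_one, P.Pi_one_pair] at this

lemma swap_mem_D (h : IsIntSemidirect P X N) (hx : x ∈ X) (hn : n ∈ N) : [n, x] ∈ P.D := by
  have := (h.mem_D_pair_iff h.one_mem_left hn hx h.one_mem_right).2
    ⟨P.one_pair_mem x, P.pair_one_mem _⟩
  rwa [P.Pi_pair_one, P.Pi_one_pair] at this

lemma Pi_swap (h : IsIntSemidirect P X N) (hx : x ∈ X) (hn : n ∈ N) :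
    P.Pi [n, x] = P.Pi [x, P.cnj x n] := by
  have := h.Pi_pair_pair h.one_mem_left hn hx h.one_mem_right
    (by simpa only [P.Pi_one_pair, P.Pi_pair_one] using h.swap_mem_D hx hn)
  simpa only [P.Pi_one_pair, P.Pi_pair_one] using this

lemma inv_Pi_pair (h : IsIntSemidirect P X N) (hx : x ∈ X) (hn : n ∈ N) :
    P.inv (P.Pi [x, n]) = P.Pi [P.inv x, P.cnj (P.inv x) (P.inv n)] := by
  rw [← P.Pi_wInv (h.pair_mem_D hx hn)]
  exact h.Pi_swap (h.subX.2.1 x hx) (h.subN.2.1 n hn)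

lemma exists_eq_Pi_pair (h : IsIntSemidirect P X N) (g : L) :
    ∃ x ∈ X, ∃ n ∈ N, g = P.Pi [x, n] := by
  obtain ⟨⟨x, n⟩, ⟨hx, hn, -, hg⟩, -⟩ := h.sd2 g
  exact ⟨x, hx, n, hn, hg⟩

lemma inter_eq_one (h : IsIntSemidirect P X N) : X ∩ N = {P.one} := by
  ext g
  refine ⟨fun ⟨hgX, hgN⟩ => ?_, fun hg => hg ▸ ⟨h.one_mem_left, h.one_mem_right⟩⟩
  have := (h.sd2 g).unique (y₁ := (g, P.one)) (y₂ := (P.one, g))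
    ⟨hgX, h.one_mem_right, P.pair_one_mem g, (P.Pi_pair_one g).symm⟩
    ⟨h.one_mem_left, hgN, P.one_pair_mem g, (P.Pi_one_pair g).symm⟩
  exact congrArg Prod.fst this

lemma isPartialNormal (h : IsIntSemidirect P X N) : P.IsPartialNormal N := by
  refine ⟨h.subN, fun g n hn hg => ?_⟩
  obtain ⟨x, hx, m, hm, rfl⟩ := h.exists_eq_Pi_pair g
  have hx' : P.inv x ∈ X := h.subX.2.1 x hx
  have hm' : P.cnj (P.inv x) (P.inv m) ∈ N := h.cnj_mem hx' (h.subN.2.1 m hm)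
  have hword : [P.Pi [P.inv x, P.cnj (P.inv x) (P.inv m)], P.Pi [P.one, n], P.Pi [x, m]] =
      [P.inv (P.Pi [x, m]), n, P.Pi [x, m]] := by
    rw [h.inv_Pi_pair hx hm, P.Pi_one_pair]
  have hd : [P.Pi [P.inv x, P.cnj (P.inv x) (P.inv m)], P.Pi [P.one, n], P.Pi [x, m]] ∈ P.D :=
    hword ▸ hg
  have hXpart : P.Pi [P.inv x, P.one, x] = P.one := by
    simpa [P.Pi_inv_pair] using
      P.Pi_insert_one (u := [P.inv x]) (w := [x]) (by simpa using P.inv_pair_mem x)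
  have hNpart := ((h.mem_D_triple_iff hx' hm' h.one_mem_left hn hx hm).1 hd).2
  rw [cnj, ← hword, h.Pi_triple hx' hm' h.one_mem_left hn hx hm hd, hXpart, P.Pi_one_pair]
  refine h.subN.2.2 _ hNpart ?_
  simp only [P.Pi_one_pair, List.mem_cons, List.not_mem_nil, or_false] at hNpart ⊢
  rintro y (rfl | rfl | rfl)
  exacts [h.cnj_mem hx hm', h.cnj_mem hx hn, hm]

end IsIntSemidirect

theorem stmt10 {L : Type u} (P : PartialGroup L) (X N : Set L)
    (h : IsIntSemidirect P X N) :
    (∀ x ∈ X, ∀ n ∈ N, [x, n] ∈ P.D ∧ [n, x] ∈ P.D) ∧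
    ((∀ g : L, ∃ x ∈ X, ∃ n ∈ N, g = P.Pi [x, n]) ∧ X ∩ N = {P.one}) ∧
    (∀ x ∈ X, ∀ n ∈ N,
      P.inv (P.Pi [x, n]) = P.Pi [P.inv x, P.cnj (P.inv x) (P.inv n)] ∧
      P.Pi [n, x] = P.Pi [x, P.cnj x n]) ∧
    P.IsPartialNormal N :=
  ⟨fun _ hx _ hn => ⟨h.pair_mem_D hx hn, h.swap_mem_D hx hn⟩,
    ⟨h.exists_eq_Pi_pair, h.inter_eq_one⟩,
    fun _ hx _ hn => ⟨h.inv_Pi_pair hx hn, h.Pi_swap hx hn⟩,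
    h.isPartialNormal⟩
end
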